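/- arXiv:2110.04967 — 2 statements merged into one kernel-verified Lean document; each statement's English description precedes it below -/
import Mathlib

section
/- For any dual quaternions â and b̂ and any natural number k, ‖â · b̂^k‖ ≤ (3/2)^(k/2) · ‖â‖ · ‖b̂‖^k, where b̂^k denotes the k-fold product of b̂ with itself. -/
/-- The norm `‖a_r + ε a_d‖ = √(‖a_r‖² + ‖a_d‖²)` of a dual quaternion. -/
noncomputable def dualQuatNorm (x : DualNumber (Quaternion ℝ)) : ℝ :=
  Real.sqrt (‖x.fst‖ ^ 2 + ‖x.snd‖ ^ 2)

lemma dualQuatNorm_nonneg (x : DualNumber (Quaternion ℝ)) : 0 ≤ dualQuatNorm x :=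
  Real.sqrt_nonneg _

lemma dualQuatNorm_mul_le (x y : DualNumber (Quaternion ℝ)) :
    dualQuatNorm (x * y) ≤ Real.sqrt (3 / 2) * (dualQuatNorm x * dualQuatNorm y) := by
  unfold dualQuatNorm
  rw [← Real.sqrt_mul (by positivity), ← Real.sqrt_mul (by norm_num)]
  apply Real.sqrt_le_sqrt
  have hf : (x * y).fst = x.fst * y.fst := TrivSqZeroExt.fst_mul x y
  have hs : (x * y).snd = x.fst • y.snd + MulOpposite.op y.fst • x.snd :=
    TrivSqZeroExt.snd_mul x y
  have h1 : ‖(x * y).fst‖ = ‖x.fst‖ * ‖y.fst‖ := by rw [hf, norm_mul]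
  have h2 : ‖(x * y).snd‖ ≤ ‖x.fst‖ * ‖y.snd‖ + ‖y.fst‖ * ‖x.snd‖ := by
    rw [hs]
    refine (norm_add_le _ _).trans ?_
    simp only [smul_eq_mul, MulOpposite.smul_eq_mul_unop, MulOpposite.unop_op, norm_mul]
    exact le_of_eq (by ring)

  have h2' : ‖(x * y).snd‖ ^ 2 ≤ (‖x.fst‖ * ‖y.snd‖ + ‖y.fst‖ * ‖x.snd‖) ^ 2 := by
    have := norm_nonneg (x * y).snd
    nlinarith
  have hp := norm_nonneg x.fst
  have hq := norm_nonneg x.snd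
  have hr := norm_nonneg y.fst
  have hss := norm_nonneg y.snd
  rw [h1]
  nlinarith [sq_nonneg (‖x.fst‖ * ‖y.fst‖ - ‖x.snd‖ * ‖y.snd‖),
    sq_nonneg (‖x.fst‖ * ‖y.snd‖ - ‖x.snd‖ * ‖y.fst‖)]

/-- For any dual quaternions `â`, `b̂` and any `k : ℕ`,
`‖â b̂^k‖ ≤ (3/2)^(k/2) ‖â‖ ‖b̂‖^k`. -/
theorem dualQuatNorm_mul_pow_le (a b : DualNumber (Quaternion ℝ)) (k : ℕ) :
    dualQuatNorm (a * b ^ k) ≤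
      (3 / 2 : ℝ) ^ ((k : ℝ) / 2) * dualQuatNorm a * dualQuatNorm b ^ k := by
  induction k with
  | zero => simp
  | succ k ih =>
    have h1 : a * b ^ (k + 1) = (a * b ^ k) * b := by
      rw [pow_succ, mul_assoc]
    have h2 := dualQuatNorm_mul_le (a * b ^ k) b
    rw [h1]
    have hsqrt : Real.sqrt (3 / 2) = (3 / 2 : ℝ) ^ ((1 : ℝ) / 2) := by
      rw [Real.sqrt_eq_rpow]
    have hb := dualQuatNorm_nonneg b
    calc dualQuatNorm ((a * b ^ k) * b)
        ≤ Real.sqrt (3 / 2) * (dualQuatNorm (a * b ^ k) * dualQuatNorm b) := h2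
      _ ≤ Real.sqrt (3 / 2) * (((3 / 2 : ℝ) ^ ((k : ℝ) / 2) * dualQuatNorm a * dualQuatNorm b ^ k) * dualQuatNorm b) := by
          gcongr
      _ = (3 / 2 : ℝ) ^ (((k + 1 : ℕ) : ℝ) / 2) * dualQuatNorm a * dualQuatNorm b ^ (k + 1) := by
          rw [hsqrt, pow_succ]
          rw [show (((k + 1 : ℕ) : ℝ) / 2) = (1 : ℝ) / 2 + (k : ℝ) / 2 by push_cast; ring]
          rw [Real.rpow_add (by norm_num)]
          ring
end

section
/- Let ω̂ = ω + ε v be a pure dual quaternion, i.e. ω and v are quaternions with zero real part, identified with vectors in ℝ³. Then for every natural number m ≥ 1, the odd power of ω̂ is given by ω̂^(2m+1) = (−1)^m ( (‖ω‖^(2m) ω) + ε ( ‖ω‖^(2m) v + 2m · ‖ω‖^(2(m−1)) · ⟨ω, v⟩ · ω ) ), where the real and dual parts on the right-hand side are the pure quaternions with the indicated vector parts, and ‖·‖, ⟨·,·⟩ denote the Euclidean norm and inner product on ℝ³. -/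
open RealInnerProductSpace

/-- The dual quaternion `a + ε b` with real part `a` and dual part `b`. -/
noncomputable def dq (a b : Quaternion ℝ) : DualNumber (Quaternion ℝ) :=
  TrivSqZeroExt.inl a + TrivSqZeroExt.inr b

lemma dq_mul (a b c d : Quaternion ℝ) : dq a b * dq c d = dq (a * c) (a * d + b * c) := by
  refine TrivSqZeroExt.ext ?_ ?_
  · simp [dq]
  · simp [dq, TrivSqZeroExt.snd_mul, MulOpposite.smul_eq_mul_unop]

lemma pure_sq (ω : Quaternion ℝ) (hω : ω.re = 0) :
    ω * ω = ((-(‖ω‖^2) : ℝ) : Quaternion ℝ) := by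
  have h : star ω = -ω := Quaternion.star_eq_neg.mpr hω
  have h2 := Quaternion.self_mul_star ω
  rw [h, mul_neg] at h2
  rw [← neg_neg (ω*ω), h2, Quaternion.normSq_eq_norm_mul_self]
  push_cast
  rw [pow_two]

lemma pure_cross (ω v : Quaternion ℝ) (hω : ω.re = 0) (hv : v.re = 0) :
    ω * v + v * ω = ((-(2*⟪ω, v⟫) : ℝ) : Quaternion ℝ) := by
  rw [Quaternion.inner_def]
  ext <;> simp [Quaternion.re_mul, Quaternion.imI_mul, Quaternion.imJ_mul,
    Quaternion.imK_mul, hω, hv] <;> ring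

lemma dq_sq (ω v : Quaternion ℝ) (hω : ω.re = 0) (hv : v.re = 0) :
    dq ω v * dq ω v =
      dq ((-(‖ω‖^2) : ℝ) : Quaternion ℝ) ((-(2*⟪ω, v⟫) : ℝ) : Quaternion ℝ) := by
  rw [dq_mul, pure_sq ω hω, pure_cross ω v hω hv]

/-- For a pure dual quaternion `ω̂ = ω + ε v` (the quaternions `ω`, `v` have zero
real part, i.e. are vectors in `ℝ³`) and any `m ≥ 1`,
`ω̂^(2m+1) = (−1)^m ((‖ω‖^(2m) ω) + ε (‖ω‖^(2m) v + 2m ‖ω‖^(2(m−1)) ⟨ω, v⟩ ω))`,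
where the real and dual parts of the right-hand side are the pure quaternions
with the indicated vector parts. -/
theorem pure_dualQuat_odd_pow (ω v : Quaternion ℝ) (hω : ω.re = 0) (hv : v.re = 0)
    (m : ℕ) (hm : 1 ≤ m) :
    (dq ω v) ^ (2 * m + 1) =
      dq (((-1 : ℝ) ^ m * ‖ω‖ ^ (2 * m)) • ω)
        (((-1 : ℝ) ^ m) • ((‖ω‖ ^ (2 * m) : ℝ) • v +
          (2 * m * ‖ω‖ ^ (2 * (m - 1)) * ⟪ω, v⟫ : ℝ) • ω)) := by
  induction m with
  | zero => omega
  | succ n ih =>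
    rcases Nat.eq_zero_or_pos n with hn | hn
    · subst hn
      show (dq ω v) ^ 3 = _
      rw [pow_succ, pow_succ, pow_one, dq_sq ω v hω hv, dq_mul]
      simp only [Quaternion.coe_mul_eq_smul]
      congr 1
      · match_scalars
        push_cast
        ring
      · match_scalars <;> push_cast <;> ring
    · obtain ⟨k, rfl⟩ : ∃ k, n = k + 1 := ⟨n - 1, by omega⟩
      rw [show 2 * (k + 1 + 1) + 1 = (2 * (k + 1) + 1) + 2 by ring, pow_add,
        pow_two, dq_sq ω v hω hv, ih (by omega), dq_mul]
      simp only [Quaternion.mul_coe_eq_smul, smul_mul_assoc, smul_add, smul_smul,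
        Nat.add_sub_cancel]
      congr 1
      · match_scalars
        push_cast
        ring
      · match_scalars <;> push_cast <;> ring
end
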